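/- arXiv:1902.07770 — 5 statements merged into one kernel-verified Lean document; each statement's English description precedes it below -/
import Mathlib

section
/- Suppose (β₀, β, θ) satisfy the stationarity conditions Xᵀθ = λβ and θᵀ1 = 0, together with the dual feasibility/complementarity conditions: θ_i = τ − 1 (or ω(τ−1) if i = i⋆) when y_i − β₀ − x_iᵀβ < 0, θ_i = τ (or ωτ if i = i⋆) when y_i − β₀ − x_iᵀβ > 0, and θ_i ∈ [τ−1, τ] (or [ω(τ−1), ωτ] if i = i⋆) when y_i − β₀ − x_iᵀβ = 0. Then (β₀, β) minimizes the case-weighted objective Σ_{i≠i⋆} ρ_τ(y_i − β₀ − xᵢᵀβ) + ω ρ_τ(y_{i⋆} − β₀ − x_{i⋆}ᵀβ) + (λ/2)‖β‖². -/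
open Finset

/-- Weighted subgradient inequality for the check loss. -/
lemma check_subgrad (τ w t r s : ℝ) (hτ1 : 0 < τ) (hτ2 : τ < 1) (hw : 0 ≤ w)
    (h1 : r < 0 → t = w * (τ - 1)) (h2 : 0 < r → t = w * τ)
    (h3 : r = 0 → w * (τ - 1) ≤ t ∧ t ≤ w * τ) :
    w * (τ * max r 0 + (1 - τ) * max (-r) 0) + t * (s - r) ≤
      w * (τ * max s 0 + (1 - τ) * max (-s) 0) := by
  rcases lt_trichotomy r 0 with hr | hr | hr
  · rw [h1 hr, max_eq_right hr.le, max_eq_left (by linarith)]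
    rcases le_total s 0 with hs | hs
    · rw [max_eq_right hs, max_eq_left (by linarith)]; nlinarith
    · rw [max_eq_left hs, max_eq_right (by linarith)]; nlinarith
  · obtain ⟨ht1, ht2⟩ := h3 hr
    subst hr
    simp only [neg_zero, max_self, mul_zero, add_zero, sub_zero, zero_add, zero_sub]
    rcases le_total s 0 with hs | hs
    · rw [max_eq_right hs, max_eq_left (by linarith)]; nlinarith
    · rw [max_eq_left hs, max_eq_right (by linarith)]; nlinarith
  · rw [h2 hr, max_eq_left hr.le, max_eq_right (by linarith)]
    rcases le_total s 0 with hs | hs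
    · rw [max_eq_right hs, max_eq_left (by linarith)]; nlinarith
    · rw [max_eq_left hs, max_eq_right (by linarith)]; nlinarith

/-- KKT sufficiency for case-weighted penalized quantile regression:
if `(β₀, β, θ)` satisfy stationarity (`Xᵀθ = λβ`, `θᵀ1 = 0`) together with the
dual feasibility/complementarity conditions, then `(β₀, β)` minimizes the
case-weighted objective. -/
theorem kkt_sufficient_case_weighted (n p : ℕ)
    (X : Matrix (Fin n) (Fin p) ℝ) (y θ : Fin n → ℝ)
    (τ lam ω : ℝ) (hτ : τ ∈ Set.Ioo (0:ℝ) 1) (hlam : 0 < lam)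
    (hω : ω ∈ Set.Icc (0:ℝ) 1) (istar : Fin n)
    (β₀ : ℝ) (β : Fin p → ℝ)
    (hstat : X.transpose.mulVec θ = lam • β)
    (hsum : ∑ i, θ i = 0)
    (hneg : ∀ i, y i - β₀ - ∑ j, X i j * β j < 0 →
      θ i = (if i = istar then ω * (τ - 1) else τ - 1))
    (hpos : ∀ i, 0 < y i - β₀ - ∑ j, X i j * β j →
      θ i = (if i = istar then ω * τ else τ))
    (helb : ∀ i, y i - β₀ - ∑ j, X i j * β j = 0 →
      θ i ∈ (if i = istar then Set.Icc (ω * (τ - 1)) (ω * τ)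
             else Set.Icc (τ - 1) τ)) :
    ∀ b₀ : ℝ, ∀ b : Fin p → ℝ,
      (∑ i ∈ univ.erase istar,
        (τ * max (y i - β₀ - ∑ j, X i j * β j) 0 +
          (1 - τ) * max (-(y i - β₀ - ∑ j, X i j * β j)) 0)) +
      ω * (τ * max (y istar - β₀ - ∑ j, X istar j * β j) 0 +
          (1 - τ) * max (-(y istar - β₀ - ∑ j, X istar j * β j)) 0) +
      lam / 2 * ∑ j, β j ^ 2
      ≤
      (∑ i ∈ univ.erase istar,
        (τ * max (y i - b₀ - ∑ j, X i j * b j) 0 +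
          (1 - τ) * max (-(y i - b₀ - ∑ j, X i j * b j)) 0)) +
      ω * (τ * max (y istar - b₀ - ∑ j, X istar j * b j) 0 +
          (1 - τ) * max (-(y istar - b₀ - ∑ j, X istar j * b j)) 0) +
      lam / 2 * ∑ j, b j ^ 2 := by
  obtain ⟨hτ1, hτ2⟩ := hτ
  obtain ⟨hω1, hω2⟩ := hω
  intro b₀ b
  set r : Fin n → ℝ := fun i => y i - β₀ - ∑ j, X i j * β j with hr
  set s : Fin n → ℝ := fun i => y i - b₀ - ∑ j, X i j * b j with hs
  set w : Fin n → ℝ := fun i => if i = istar then ω else 1 with hwdef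
  set ρ : ℝ → ℝ := fun u => τ * max u 0 + (1 - τ) * max (-u) 0 with hρ
  -- pointwise inequality
  have hpt : ∀ i ∈ univ, w i * ρ (r i) + θ i * (s i - r i) ≤ w i * ρ (s i) := by
    intro i _
    have hwnn : 0 ≤ w i := by by_cases h : i = istar <;> simp [hwdef, h] <;> linarith
    refine check_subgrad τ (w i) (θ i) (r i) (s i) hτ1 hτ2 hwnn ?_ ?_ ?_
    · intro h; have := hneg i h
      by_cases hi : i = istar <;> simp [hwdef, hi] at this ⊢ <;> linarith
    · intro h; have := hpos i h
      by_cases hi : i = istar <;> simp [hwdef, hi] at this ⊢ <;> linarith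
    · intro h; have := helb i h
      by_cases hi : i = istar <;> simp [hwdef, hi] at this ⊢ <;>
        exact ⟨this.1, this.2⟩
  have hsum_pt : ∑ i, (w i * ρ (r i) + θ i * (s i - r i)) ≤ ∑ i, w i * ρ (s i) :=
    Finset.sum_le_sum (fun i hi => hpt i hi)
  -- compute the linear term
  have hθlin : ∑ i, θ i * (s i - r i) = lam * ∑ j, β j * (β j - b j) := by
    have hdiff : ∀ i, s i - r i = (β₀ - b₀) + ∑ j, X i j * (β j - b j) := by
      intro i
      simp only [hr, hs, mul_sub, Finset.sum_sub_distrib]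
      ring
    calc ∑ i, θ i * (s i - r i)
        = ∑ i, (θ i * (β₀ - b₀) + ∑ j, θ i * (X i j * (β j - b j))) := by
          refine Finset.sum_congr rfl fun i _ => ?_
          rw [hdiff i, mul_add, Finset.mul_sum]
      _ = (∑ i, θ i) * (β₀ - b₀) + ∑ j, (∑ i, X i j * θ i) * (β j - b j) := by
          rw [Finset.sum_add_distrib, ← Finset.sum_mul, Finset.sum_comm]
          congr 1
          refine Finset.sum_congr rfl fun j _ => ?_
          rw [Finset.sum_mul]
          refine Finset.sum_congr rfl fun i _ => ?_
          ring
      _ = lam * ∑ j, β j * (β j - b j) := by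
          rw [hsum, zero_mul, zero_add, Finset.mul_sum]
          refine Finset.sum_congr rfl fun j _ => ?_
          have h2 : ∑ i, X i j * θ i = lam * β j := by
            have := congrFun hstat j
            simpa [Matrix.mulVec, dotProduct, Matrix.transpose_apply,
              mul_comm] using this
          rw [h2]; ring
  -- quadratic penalty convexity
  have hquad : lam / 2 * ∑ j, β j ^ 2 ≤
      lam * ∑ j, β j * (β j - b j) + lam / 2 * ∑ j, b j ^ 2 := by
    have h : ∀ j ∈ (univ : Finset (Fin p)),
        β j ^ 2 ≤ 2 * (β j * (β j - b j)) + b j ^ 2 := by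
      intro j _; nlinarith [sq_nonneg (b j - β j)]
    have := Finset.sum_le_sum h
    rw [Finset.sum_add_distrib, ← Finset.mul_sum] at this
    nlinarith
  -- reassemble sums over erase vs univ
  have hsplit : ∀ (f : Fin n → ℝ),
      ∑ i, w i * f i = ω * f istar + ∑ i ∈ univ.erase istar, f i := by
    intro f
    rw [← Finset.add_sum_erase _ _ (Finset.mem_univ istar)]
    simp only [hwdef, if_pos rfl]
    congr 1
    refine Finset.sum_congr rfl fun i hi => ?_
    rw [if_neg (Finset.mem_erase.mp hi).1, one_mul]
  have hr' := hsplit (fun i => ρ (r i))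
  have hs' := hsplit (fun i => ρ (s i))
  rw [Finset.sum_add_distrib, hθlin] at hsum_pt
  simp only [hρ, hr, hs] at hsum_pt hr' hs'
  linarith [hsum_pt, hquad, hr', hs']
end

section
/- In ridge regression with case weight ω ∈ [0,1) on case i⋆, the case-weight adjusted Cook's distance satisfies D_{i⋆}(ω) = r_{i⋆}² Σ_j h_{j i⋆}(λ)² / (p σ̂² (1/(1−ω) − h_{i⋆ i⋆}(λ))²), where r_{i⋆} is the full-data residual of case i⋆ and h_{ij}(λ) are the entries of the ridge hat matrix H(λ) = X̃(X̃ᵀX̃ + λ Ĩ)⁻¹X̃ᵀ. -/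
open Matrix Finset

/-- In ridge regression with case weight `ω ∈ [0,1)` on case `i⋆`, the case-weight
adjusted Cook's distance satisfies
`D_{i⋆}(ω) = r_{i⋆}² Σ_j h_{j i⋆}(λ)² / (p σ̂² (1/(1−ω) − h_{i⋆ i⋆}(λ))²)`. -/
theorem ridge_case_weight_cook_distance (n p : ℕ)
    (Xt : Matrix (Fin n) (Fin (p + 1)) ℝ) (y : Fin n → ℝ)
    (lam : ℝ) (hlam : 0 < lam) (σ : ℝ) (hσ : 0 < σ) (hp : 0 < p)
    (It : Matrix (Fin (p + 1)) (Fin (p + 1)) ℝ)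
    (hIt : It = Matrix.diagonal (fun j => if j = 0 then (0:ℝ) else 1))
    (ω : ℝ) (hω : ω ∈ Set.Ico (0:ℝ) 1) (istar : Fin n)
    (hD : IsUnit (Xt.transpose * Xt + lam • It).det)
    (β₁ βω : Fin (p + 1) → ℝ)
    (hfull : Xt.transpose.mulVec (y - Xt.mulVec β₁) = lam • It.mulVec β₁)
    (hweighted :
      (∑ i, (if i = istar then ω else 1) •
        ((y i - Xt.mulVec βω i) • (fun j => Xt i j))) = lam • It.mulVec βω)
    (hden : 1 / (1 - ω) -
      (Xt * (Xt.transpose * Xt + lam • It)⁻¹ * Xt.transpose) istar istar ≠ 0) :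
    (∑ i, (Xt.mulVec β₁ i - Xt.mulVec βω i) ^ 2) / (p * σ ^ 2) =
      (y istar - Xt.mulVec β₁ istar) ^ 2 *
        (∑ j, ((Xt * (Xt.transpose * Xt + lam • It)⁻¹ * Xt.transpose) j istar) ^ 2) /
      (p * σ ^ 2 *
        (1 / (1 - ω) -
          (Xt * (Xt.transpose * Xt + lam • It)⁻¹ * Xt.transpose) istar istar) ^ 2) := by
  set A := Xt.transpose * Xt + lam • It with hA
  have hω1 : (1 : ℝ) - ω ≠ 0 := by have := hω.2; linarith
  -- x = row istar of Xt
  set x : Fin (p + 1) → ℝ := fun j => Xt istar j with hx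
  set u' : ℝ := y istar - Xt.mulVec βω istar with hu'
  set s : ℝ := (1 - ω) * u' with hs
  set r : ℝ := y istar - Xt.mulVec β₁ istar with hr
  set H := Xt * A⁻¹ * Xt.transpose with hH
  set h : ℝ := H istar istar with hh
  set d : ℝ := 1 / (1 - ω) - h with hd
  -- full data normal equation
  have hfull' : A.mulVec β₁ = Xt.transpose.mulVec y := by
    have := hfull
    rw [Matrix.mulVec_sub] at this
    rw [hA, Matrix.add_mulVec, Matrix.smul_mulVec, ← Matrix.mulVec_mulVec, ← this]
    abel
  -- weighted normal equation
  have hwe : A.mulVec βω = Xt.transpose.mulVec y - s • x := by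
    have key : Xt.transpose.mulVec (y - Xt.mulVec βω) - s • x
        = lam • It.mulVec βω := by
      rw [← hweighted]
      funext j
      simp only [Matrix.mulVec, dotProduct, Matrix.transpose_apply, Pi.sub_apply,
        Finset.sum_apply, Pi.smul_apply, smul_eq_mul]
      have helper : ∀ i, (if i = istar then ω else 1) * ((y i - ∑ k, Xt i k * βω k) * Xt i j)
          = Xt i j * (y i - ∑ k, Xt i k * βω k) - (if i = istar then s * Xt istar j else 0) := by
        intro i
        by_cases hi : i = istar
        · subst hi
          simp only [eq_self_iff_true, if_true, hs, hu', Matrix.mulVec, dotProduct]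
          ring
        · simp [hi]; ring
      have e2 : (∑ i, (if i = istar then ω else 1) * ((y i - ∑ k, Xt i k * βω k) * Xt i j))
          = (∑ i, Xt i j * (y i - ∑ k, Xt i k * βω k)) - s * Xt istar j := by
        rw [Finset.sum_congr rfl (fun i _ => helper i), Finset.sum_sub_distrib]
        congr 1
        simp
      rw [e2]
    rw [hA, Matrix.add_mulVec, Matrix.smul_mulVec, ← Matrix.mulVec_mulVec, ← key,
      Matrix.mulVec_sub]
    abel
  have hAinv : A⁻¹ * A = 1 := Matrix.nonsing_inv_mul A hD
  -- βω = β₁ - s • A⁻¹ x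
  have hβ : βω = β₁ - s • A⁻¹.mulVec x := by
    have h1 : A.mulVec βω = A.mulVec β₁ - s • x := by rw [hwe, hfull']
    have h2 : A⁻¹.mulVec (A.mulVec βω) = A⁻¹.mulVec (A.mulVec β₁ - s • x) := by rw [h1]
    rw [Matrix.mulVec_sub, Matrix.mulVec_smul] at h2
    rw [Matrix.mulVec_mulVec, Matrix.mulVec_mulVec, hAinv, Matrix.one_mulVec,
      Matrix.one_mulVec] at h2
    exact h2
  -- X A⁻¹ x = column istar of H
  have hcol : Xt.mulVec (A⁻¹.mulVec x) = fun j => H j istar := by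
    funext j
    rw [Matrix.mulVec_mulVec]
    simp [hH, Matrix.mul_apply, Matrix.mulVec, dotProduct, Matrix.transpose_apply,
      hx]
  -- difference of fits
  have hdiff : ∀ i, Xt.mulVec β₁ i - Xt.mulVec βω i = s * H i istar := by
    intro i
    rw [hβ, Matrix.mulVec_sub, Matrix.mulVec_smul, hcol]
    simp
  -- relation at istar
  have hrel : u' * (1 - (1 - ω) * h) = r := by
    have hthis : (Xt.mulVec β₁) istar - (Xt.mulVec βω) istar = s * h := by
      rw [hh]; exact hdiff istar
    have h2 : u' - r = s * h := by
      rw [hu', hr]; linarith [hthis]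
    rw [hs] at h2
    linear_combination h2
  have hd1 : (1 - ω) * d = 1 - (1 - ω) * h := by
    rw [hd]; field_simp
  have hdne : (1 : ℝ) - (1 - ω) * h ≠ 0 := by
    rw [← hd1]
    exact mul_ne_zero hω1 hden
  have hsd : s * d = r := by
    have : s * d = u' * ((1 - ω) * d) := by rw [hs]; ring
    rw [this, hd1, hrel]
  -- main computation
  have hsum : (∑ i, (Xt.mulVec β₁ i - Xt.mulVec βω i) ^ 2)
      = s ^ 2 * ∑ i, (H i istar) ^ 2 := by
    rw [Finset.mul_sum]
    apply Finset.sum_congr rfl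
    intro i _
    rw [hdiff i]; ring
  have hpσ : (p : ℝ) * σ ^ 2 ≠ 0 := by positivity
  rw [hsum, ← hsd]
  field_simp
end

section
/- In ridge regression with case weight ω on case i⋆, the difference of fitted values at any point x_j satisfies f̂(x_j) − f̂^{i⋆}_ω(x_j) = h_{j i⋆}(λ) r_{i⋆} / (1/(1−ω) − h_{i⋆ i⋆}(λ)), where r_{i⋆} is the full-data residual for case i⋆. -/
open Matrix Finset

/-- In ridge regression with case weight `ω` on case `i⋆`, the difference of
fitted values satisfies
`f̂(x_j) − f̂^{i⋆}_ω(x_j) = h_{j i⋆}(λ) r_{i⋆} / (1/(1−ω) − h_{i⋆ i⋆}(λ))`. -/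
theorem ridge_case_weight_fit_difference (n p : ℕ)
    (Xt : Matrix (Fin n) (Fin (p + 1)) ℝ) (y : Fin n → ℝ)
    (lam : ℝ) (hlam : 0 < lam)
    (It : Matrix (Fin (p + 1)) (Fin (p + 1)) ℝ)
    (hIt : It = Matrix.diagonal (fun j => if j = 0 then (0:ℝ) else 1))
    (ω : ℝ) (hω : ω ∈ Set.Ico (0:ℝ) 1) (istar : Fin n)
    (hD : IsUnit (Xt.transpose * Xt + lam • It).det)
    (β₁ βω : Fin (p + 1) → ℝ)
    (hfull : Xt.transpose.mulVec (y - Xt.mulVec β₁) = lam • It.mulVec β₁)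
    (hweighted :
      (∑ i, (if i = istar then ω else 1) •
        ((y i - Xt.mulVec βω i) • (fun j => Xt i j))) = lam • It.mulVec βω)
    (hden : 1 / (1 - ω) -
      (Xt * (Xt.transpose * Xt + lam • It)⁻¹ * Xt.transpose) istar istar ≠ 0)
    (j : Fin n) :
    Xt.mulVec β₁ j - Xt.mulVec βω j =
      (Xt * (Xt.transpose * Xt + lam • It)⁻¹ * Xt.transpose) j istar *
        (y istar - Xt.mulVec β₁ istar) /
      (1 / (1 - ω) -
        (Xt * (Xt.transpose * Xt + lam • It)⁻¹ * Xt.transpose) istar istar) := by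
  obtain ⟨hω0, hω1⟩ := hω
  have h1ω : (1:ℝ) - ω ≠ 0 := by linarith
  set D := Xt.transpose * Xt + lam • It with hDdef
  have hDD : D⁻¹ * D = 1 := Matrix.nonsing_inv_mul D hD
  set e : Fin n → ℝ := Pi.single istar 1 with he
  have hx : (fun k => Xt istar k) = Xt.transpose.mulVec e := by
    funext k
    simp [he, Matrix.transpose_apply]
  set rω : ℝ := y istar - Xt.mulVec βω istar with hrω
  set c : ℝ := (1 - ω) * rω with hc
  -- normal equation for the full-data estimate
  have h1 : D.mulVec β₁ = Xt.transpose.mulVec y := by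
    have h := hfull
    rw [Matrix.mulVec_sub] at h
    rw [hDdef, Matrix.add_mulVec, Matrix.smul_mulVec, ← Matrix.mulVec_mulVec, ← h]
    abel
  -- split the weighted sum
  have key : ∀ (v : Fin n → Fin (p+1) → ℝ),
      ∑ i, (if i = istar then ω else 1) • v i = (∑ i, v i) - (1-ω) • v istar := by
    intro v
    have hterm : ∀ i, (if i = istar then ω else 1) • v i
        = v i - (if i = istar then (1-ω) • v i else 0) := by
      intro i
      by_cases hi : i = istar
      · rw [if_pos hi, if_pos hi, eq_sub_iff_add_eq, ← add_smul,
          show ω + (1-ω) = 1 by ring, one_smul]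
      · simp [hi]
    simp only [hterm, Finset.sum_sub_distrib, Finset.sum_ite_eq' Finset.univ,
      Finset.mem_univ, if_true]
  have hsum2 : (∑ i, (y i - Xt.mulVec βω i) • (fun j : Fin (p+1) => Xt i j))
      = Xt.transpose.mulVec (y - Xt.mulVec βω) := by
    funext k
    simp only [Finset.sum_apply, Pi.smul_apply, smul_eq_mul, Matrix.mulVec,
      dotProduct, Matrix.transpose_apply, Pi.sub_apply]
    exact Finset.sum_congr rfl fun i _ => by ring
  -- normal equation for the case-weighted estimate
  have h2 : D.mulVec βω = Xt.transpose.mulVec y - c • (fun k => Xt istar k) := by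
    have h := hweighted
    rw [key, hsum2, Matrix.mulVec_sub] at h
    have hsm : (1-ω) • ((y istar - Xt.mulVec βω istar) • (fun j : Fin (p+1) => Xt istar j))
        = c • (fun k => Xt istar k) := by
      rw [smul_smul]
    rw [hsm] at h
    rw [hDdef, Matrix.add_mulVec, Matrix.smul_mulVec, ← Matrix.mulVec_mulVec, ← h]
    abel
  have hdiff : β₁ - βω = c • (D⁻¹.mulVec (Xt.transpose.mulVec e)) := by
    have h : D.mulVec (β₁ - βω) = c • (Xt.transpose.mulVec e) := by
      rw [Matrix.mulVec_sub, h1, h2, hx]; abel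
    calc β₁ - βω = (D⁻¹ * D).mulVec (β₁ - βω) := by rw [hDD, Matrix.one_mulVec]
      _ = D⁻¹.mulVec (D.mulVec (β₁ - βω)) := by rw [← Matrix.mulVec_mulVec]
      _ = _ := by rw [h, Matrix.mulVec_smul]
  have h4 : ∀ i, Xt.mulVec β₁ i - Xt.mulVec βω i = c * (Xt * D⁻¹ * Xt.transpose) i istar := by
    intro i
    have hvec : Xt.mulVec β₁ - Xt.mulVec βω = c • ((Xt * D⁻¹ * Xt.transpose).mulVec e) := by
      rw [← Matrix.mulVec_sub, hdiff, Matrix.mulVec_smul, Matrix.mulVec_mulVec,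
        Matrix.mulVec_mulVec]
    have hvi := congrFun hvec i
    simpa [he] using hvi
  have h5 := h4 istar
  rw [h4 j, eq_div_iff hden]
  set a := (Xt * D⁻¹ * Xt.transpose) j istar with ha
  set b := (Xt * D⁻¹ * Xt.transpose) istar istar with hb
  have hcr : c * (1/(1-ω)) = rω := by
    rw [hc]; field_simp
  calc c * a * (1/(1-ω) - b) = a * (c * (1/(1-ω)) - c * b) := by ring
    _ = a * (rω - c * b) := by rw [hcr]
    _ = a * (y istar - Xt.mulVec β₁ istar) := by rw [← h5, hrω]; ring
end

section
/- (Leave-part-out lemma) Let ℓ : ℝ → [0,∞) be a nonnegative loss with ℓ(0) = 0, J a penalty functional, λ ≥ 0, and ω ∈ [0,1]. Suppose f̂ᵢ_ω minimizes Σ_{j≠i} ℓ(y_j − f(x_j)) + ω ℓ(y_i − f(x_i)) + λJ(f) over a function class F. Then f̂ᵢ_ω also minimizes the perturbed objective Q_ω(f) = Σ_{j≠i} ℓ(y_j − f(x_j)) + ω ℓ(y_i − f(x_i)) + (1−ω) ℓ(f̂ᵢ_ω(x_i) − f(x_i)) + λJ(f) over F. -/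
open Finset

/-- Leave-part-out lemma: if `f̂ᵢ_ω` minimizes the case-weighted objective
`Σ_{j≠i} ℓ(y_j − f(x_j)) + ω ℓ(y_i − f(x_i)) + λJ(f)` over `F`, then it also
minimizes the perturbed objective
`Q_ω(f) = Σ_{j≠i} ℓ(y_j − f(x_j)) + ω ℓ(y_i − f(x_i)) + (1−ω) ℓ(f̂ᵢ_ω(x_i) − f(x_i)) + λJ(f)`. -/
theorem leave_part_out (α : Type*) (n : ℕ) (x : Fin n → α) (y : Fin n → ℝ)
    (F : Set (α → ℝ)) (ℓ : ℝ → ℝ) (hℓ : ∀ t, 0 ≤ ℓ t) (hℓ0 : ℓ 0 = 0)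
    (J : (α → ℝ) → ℝ) (lam : ℝ) (hlam : 0 ≤ lam)
    (ω : ℝ) (hω : ω ∈ Set.Icc (0:ℝ) 1) (i : Fin n)
    (fhat : α → ℝ) (hmem : fhat ∈ F)
    (hmin : ∀ f ∈ F,
      (∑ j ∈ univ.erase i, ℓ (y j - fhat (x j))) + ω * ℓ (y i - fhat (x i)) +
        lam * J fhat ≤
      (∑ j ∈ univ.erase i, ℓ (y j - f (x j))) + ω * ℓ (y i - f (x i)) +
        lam * J f) :
    ∀ f ∈ F,
      (∑ j ∈ univ.erase i, ℓ (y j - fhat (x j))) + ω * ℓ (y i - fhat (x i)) +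
        (1 - ω) * ℓ (fhat (x i) - fhat (x i)) + lam * J fhat ≤
      (∑ j ∈ univ.erase i, ℓ (y j - f (x j))) + ω * ℓ (y i - f (x i)) +
        (1 - ω) * ℓ (fhat (x i) - f (x i)) + lam * J f := by
  intro f hf
  have h := hmin f hf
  have h1 : ℓ (fhat (x i) - fhat (x i)) = 0 := by simp [hℓ0]
  have h2 : 0 ≤ (1 - ω) * ℓ (fhat (x i) - f (x i)) :=
    mul_nonneg (by linarith [hω.2]) (hℓ _)
  rw [h1]
  linarith
end

section
/- For ridge regression, the case-weight-based approximate degrees of freedom equals the trace of the hat matrix for every ω ∈ [0,1): df_ω(f̂) := (1/(1−ω)) Σᵢ (f̂(xᵢ) − f̂ⁱ_ω(xᵢ))/(yᵢ − f̂ⁱ_ω(xᵢ)) = Σᵢ h_{ii}(λ) = tr H(λ), provided each residual rᵢ = yᵢ − f̂(xᵢ) is nonzero and 1/(1−ω) − h_{ii}(λ) > 0. -/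
open Matrix Finset

/-- For ridge regression, the case-weight-based approximate degrees of freedom
equals the trace of the hat matrix for every `ω ∈ [0,1)`:
`(1/(1−ω)) Σᵢ (f̂(xᵢ) − f̂ⁱ_ω(xᵢ))/(yᵢ − f̂ⁱ_ω(xᵢ)) = Σᵢ h_{ii}(λ)`. -/
theorem ridge_case_weight_df (n p : ℕ)
    (Xt : Matrix (Fin n) (Fin (p + 1)) ℝ) (y : Fin n → ℝ)
    (lam : ℝ) (hlam : 0 < lam)
    (It : Matrix (Fin (p + 1)) (Fin (p + 1)) ℝ)
    (hIt : It = Matrix.diagonal (fun j => if j = 0 then (0:ℝ) else 1))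
    (ω : ℝ) (hω : ω ∈ Set.Ico (0:ℝ) 1)
    (hD : IsUnit (Xt.transpose * Xt + lam • It).det)
    (β₁ : Fin (p + 1) → ℝ) (βω : Fin n → Fin (p + 1) → ℝ)
    (hfull : Xt.transpose.mulVec (y - Xt.mulVec β₁) = lam • It.mulVec β₁)
    (hweighted : ∀ i : Fin n,
      (∑ k, (if k = i then ω else 1) •
        ((y k - Xt.mulVec (βω i) k) • (fun j => Xt k j))) =
        lam • It.mulVec (βω i))
    (hres : ∀ i : Fin n, y i - Xt.mulVec β₁ i ≠ 0)
    (hden : ∀ i : Fin n, 0 < 1 / (1 - ω) -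
      (Xt * (Xt.transpose * Xt + lam • It)⁻¹ * Xt.transpose) i i) :
    (1 / (1 - ω)) *
      ∑ i, (Xt.mulVec β₁ i - Xt.mulVec (βω i) i) / (y i - Xt.mulVec (βω i) i) =
    ∑ i, (Xt * (Xt.transpose * Xt + lam • It)⁻¹ * Xt.transpose) i i := by
  obtain ⟨hω0, hω1⟩ := hω
  have hω1' : (1 : ℝ) - ω ≠ 0 := by linarith
  set A := Xt.transpose * Xt + lam • It with hAdef
  have hInv : A⁻¹ * A = 1 := Matrix.nonsing_inv_mul A hD
  -- full-data normal equation
  have hA1 : A.mulVec β₁ = Xt.transpose.mulVec y := by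
    have := hfull
    rw [Matrix.mulVec_sub] at this
    have h2 : (lam • It).mulVec β₁ = lam • It.mulVec β₁ :=
      Matrix.smul_mulVec lam It β₁
    rw [hAdef, Matrix.add_mulVec, h2, ← this, Matrix.mulVec_mulVec]
    abel
  -- per-index facts
  have key : ∀ i : Fin n,
      Xt.mulVec β₁ i - Xt.mulVec (βω i) i =
        ((1 - ω) * (y i - Xt.mulVec (βω i) i)) *
          (Xt * A⁻¹ * Xt.transpose) i i := by
    intro i
    set c : ℝ := (1 - ω) * (y i - Xt.mulVec (βω i) i) with hc
    -- weighted normal equation rearranged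
    have hA2 : A.mulVec (βω i) =
        Xt.transpose.mulVec y - c • (fun j => Xt i j) := by
      have hw := hweighted i
      have hsum : (∑ k, (if k = i then ω else 1) •
          ((y k - Xt.mulVec (βω i) k) • (fun j => Xt k j)))
          = Xt.transpose.mulVec (y - Xt.mulVec (βω i))
            - ((1 - ω) * (y i - Xt.mulVec (βω i) i)) • (fun j => Xt i j) := by
        funext j
        simp only [Finset.sum_apply, Pi.smul_apply, Pi.sub_apply, smul_eq_mul,
          Matrix.mulVec, Matrix.transpose_apply, dotProduct]
        have hstep : ∀ k : Fin n,
            (if k = i then ω else 1) *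
              ((y k - ∑ m, Xt k m * βω i m) * Xt k j)
            = Xt k j * (y k - ∑ m, Xt k m * βω i m) -
              (if k = i then
                (1 - ω) * (y i - ∑ m, Xt i m * βω i m) * Xt i j else 0) := by
          intro k
          by_cases hk : k = i <;> simp [hk] <;> ring
        rw [Finset.sum_congr rfl fun k _ => hstep k, Finset.sum_sub_distrib,
          Finset.sum_ite_eq' Finset.univ i]
        simp
      rw [hsum] at hw
      have h2 : (lam • It).mulVec (βω i) = lam • It.mulVec (βω i) :=
        Matrix.smul_mulVec lam It (βω i)
      rw [hAdef, Matrix.add_mulVec, h2, ← hw, Matrix.mulVec_sub,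
        Matrix.mulVec_mulVec, hc]
      abel
    have hdiff : β₁ - βω i = c • A⁻¹.mulVec (fun j => Xt i j) := by
      have h3 : A.mulVec (β₁ - βω i) = c • (fun j => Xt i j) := by
        rw [Matrix.mulVec_sub, hA1, hA2]; abel
      calc β₁ - βω i = (A⁻¹ * A).mulVec (β₁ - βω i) := by
            rw [hInv, Matrix.one_mulVec]
        _ = A⁻¹.mulVec (A.mulVec (β₁ - βω i)) := (Matrix.mulVec_mulVec _ _ _).symm
        _ = A⁻¹.mulVec (c • (fun j => Xt i j)) := by rw [h3]
        _ = c • A⁻¹.mulVec (fun j => Xt i j) := by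
            rw [Matrix.mulVec_smul]
    have hH : Xt.mulVec (A⁻¹.mulVec (fun j => Xt i j)) i
        = (Xt * A⁻¹ * Xt.transpose) i i := by
      simp only [Matrix.mulVec, Matrix.mul_apply, dotProduct,
        Matrix.transpose_apply, Finset.sum_mul, Finset.mul_sum]
      rw [Finset.sum_comm]
      apply Finset.sum_congr rfl
      intro j _
      apply Finset.sum_congr rfl
      intro k _
      ring
    have : Xt.mulVec β₁ i - Xt.mulVec (βω i) i
        = Xt.mulVec (β₁ - βω i) i := by
      simp [Matrix.mulVec_sub]
    rw [this, hdiff, Matrix.mulVec_smul, Pi.smul_apply, smul_eq_mul, hH]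
  -- the ratio equals (1-ω) * h_ii
  have ratio : ∀ i : Fin n,
      (Xt.mulVec β₁ i - Xt.mulVec (βω i) i) / (y i - Xt.mulVec (βω i) i)
        = (1 - ω) * (Xt * A⁻¹ * Xt.transpose) i i := by
    intro i
    have hr : y i - Xt.mulVec (βω i) i ≠ 0 := by
      intro h0
      apply hres i
      have := key i
      rw [h0] at this
      simp at this
      -- y i - Xβ₁ i = (y i - Xβω i) - (Xβ₁ i - Xβω i) = 0 - 0
      have : y i - Xt.mulVec β₁ i
          = (y i - Xt.mulVec (βω i) i) - (Xt.mulVec β₁ i - Xt.mulVec (βω i) i) := by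
        ring
      rw [this, h0, key i, h0]
      ring
    rw [key i]
    field_simp
  rw [Finset.sum_congr rfl (fun i _ => ratio i), ← Finset.mul_sum]
  field_simp
end
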